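/- Let G be a finite graph, let εᵢ (i=1,2) be entanglements in G with crossing separations sᵢ ∈ εᵢ, |s₁| ≤ |s₂|. Suppose exactly three corners of s₁, s₂ have order at most |s₂|. Then there exist opposite corners c₁, c₂ of s₁, s₂ with c₁ ∈ ε₁, c₂ ∈ ε₂, and moreover |c₁| = |s₁| and |c₂| = |s₂|. -/
import Mathlib


open Set

variable {V : Type*}

/-- A separation, represented as an ordered pair of sides (standing for the
unordered pair `{A, B}`). -/
abbrev GSep (V : Type*) := Set V × Set V

/-- The order of a separation: the size of its separator `A ∩ B`. -/
noncomputable def sOrd (s : GSep V) : ℕ := (s.1 ∩ s.2).ncard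

/-- `(A, B)` is a separation of `G`: the sides cover `V (G)` and there is no
edge between `A \ B` and `B \ A`. -/
def IsSep (G : SimpleGraph V) (s : GSep V) : Prop :=
  s.1 ∪ s.2 = Set.univ ∧ ∀ a ∈ s.1 \ s.2, ∀ b ∈ s.2 \ s.1, ¬ G.Adj a b

/-- A separation is proper if both `A \ B` and `B \ A` are nonempty. -/
def IsProper (s : GSep V) : Prop := (s.1 \ s.2).Nonempty ∧ (s.2 \ s.1).Nonempty

/-- Two separations are nested if, after possibly renaming their sides,
`A ⊆ C` and `B ⊇ D`. -/
def Nested (s t : GSep V) : Prop :=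
  (s.1 ⊆ t.1 ∧ t.2 ⊆ s.2) ∨ (s.1 ⊆ t.2 ∧ t.1 ⊆ s.2) ∨
  (s.2 ⊆ t.1 ∧ t.2 ⊆ s.1) ∨ (s.2 ⊆ t.2 ∧ t.1 ⊆ s.1)

/-- Two separations cross if they are not nested. -/
def Crosses (s t : GSep V) : Prop := ¬ Nested s t

/-- The corner `(A ∩ C, B ∪ D)` of two (crossing) separations `(A,B)`, `(C,D)`.
The four corners of `s, t` are `corner s t`, `corner s t.swap`,
`corner s.swap t` and `corner s.swap t.swap`; two corners are opposite if both
side choices are opposite, and two distinct corners lie on the same side of `s`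
if they use the same side of `s`. -/
def corner (s t : GSep V) : GSep V := (s.1 ∩ t.1, s.2 ∪ t.2)

/-- An entanglement in `G`: a nonempty set of proper separations of `G`
(closed under swapping sides, i.e. a set of unordered separations) such that
whenever `s ∈ ε` is crossed by a separation `t` of `G` so that the two corners
lying on the same side of `s` have order at most `sOrd s`, at least one of
these corners has order exactly `sOrd s` and lies in `ε`. -/
def IsEntanglement (G : SimpleGraph V) (ε : Set (GSep V)) : Prop :=
  ε.Nonempty ∧
  (∀ s ∈ ε, IsSep G s ∧ IsProper s) ∧
  (∀ s ∈ ε, Prod.swap s ∈ ε) ∧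
  ∀ s ∈ ε, ∀ t : GSep V, IsSep G t → Crosses s t →
    sOrd (corner s t) ≤ sOrd s → sOrd (corner s (Prod.swap t)) ≤ sOrd s →
    (sOrd (corner s t) = sOrd s ∧ corner s t ∈ ε) ∨
    (sOrd (corner s (Prod.swap t)) = sOrd s ∧ corner s (Prod.swap t) ∈ ε)

/-- The separations of `G` lying in some entanglement. -/
def EntSeps (G : SimpleGraph V) : Set (GSep V) :=
  {t | ∃ ε, IsEntanglement G ε ∧ t ∈ ε}

/-- The crossing number of `s`: the number of separations lying in
entanglements in `G` which are crossed by `s`. -/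
noncomputable def xnum (G : SimpleGraph V) (s : GSep V) : ℕ :=
  {t ∈ EntSeps G | Crosses s t}.ncard

/-- A separation in an entanglement `ε` is friendly if no other separation in
`ε` crosses fewer separations in entanglements in `G`. -/
def Friendly (G : SimpleGraph V) (s : GSep V) : Prop :=
  ∃ ε, IsEntanglement G ε ∧ s ∈ ε ∧ ∀ t ∈ ε, xnum G s ≤ xnum G t


lemma sOrd_swap (s : GSep V) : sOrd (Prod.swap s) = sOrd s := by
  simp [sOrd, Set.inter_comm]

lemma corner_comm (s t : GSep V) : corner s t = corner t s := by
  simp only [corner, Prod.mk.injEq]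
  exact ⟨Set.inter_comm _ _, Set.union_comm _ _⟩

lemma nested_swap_left (s t : GSep V) : Nested (Prod.swap s) t ↔ Nested s t := by
  simp only [Nested, Prod.fst_swap, Prod.snd_swap]; tauto

lemma nested_comm (s t : GSep V) : Nested s t ↔ Nested t s := by
  unfold Nested; tauto

lemma crosses_comm (s t : GSep V) : Crosses s t → Crosses t s := by
  unfold Crosses; rw [nested_comm]; exact id

lemma crosses_swap_left (s t : GSep V) : Crosses s t → Crosses (Prod.swap s) t := by
  unfold Crosses; rw [nested_swap_left]; exact id

lemma submod [Fintype V] (s t : GSep V) :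
    sOrd (corner s t) + sOrd (corner (Prod.swap s) (Prod.swap t)) ≤ sOrd s + sOrd t := by
  have hfin : ∀ X : Set V, X.Finite := fun X => X.toFinite
  unfold sOrd corner
  simp only [Prod.fst_swap, Prod.snd_swap]
  set X := (s.1 ∩ t.1) ∩ (s.2 ∪ t.2) with hX
  set Y := (s.2 ∩ t.2) ∩ (s.1 ∪ t.1) with hY
  set P := s.1 ∩ s.2 with hP
  set Q := t.1 ∩ t.2 with hQ
  have h1 : X ∪ Y ⊆ P ∪ Q := by
    intro x hx
    simp only [hX, hY, hP, hQ, Set.mem_union, Set.mem_inter_iff] at *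
    tauto
  have h2 : X ∩ Y ⊆ P ∩ Q := by
    intro x hx
    simp only [hX, hY, hP, hQ, Set.mem_union, Set.mem_inter_iff] at *
    tauto
  calc X.ncard + Y.ncard
      = (X ∪ Y).ncard + (X ∩ Y).ncard :=
        (Set.ncard_union_add_ncard_inter X Y (hfin X) (hfin Y)).symm
    _ ≤ (P ∪ Q).ncard + (P ∩ Q).ncard :=
        add_le_add (Set.ncard_le_ncard h1 (hfin _)) (Set.ncard_le_ncard h2 (hfin _))
    _ = P.ncard + Q.ncard :=
        Set.ncard_union_add_ncard_inter P Q (hfin P) (hfin Q)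

lemma key [Fintype V] (G : SimpleGraph V) (ε₁ ε₂ : Set (GSep V))
    (h₁ : IsEntanglement G ε₁) (h₂ : IsEntanglement G ε₂)
    (s₁ s₂ : GSep V) (hs₁ : s₁ ∈ ε₁) (hs₂ : s₂ ∈ ε₂)
    (hcross : Crosses s₁ s₂) (hord : sOrd s₁ ≤ sOrd s₂)
    (hbad : ¬ sOrd (corner s₁ s₂) ≤ sOrd s₂)
    (hg1 : sOrd (corner s₁ (Prod.swap s₂)) ≤ sOrd s₂) :
    corner (Prod.swap s₁) s₂ ∈ ε₁ ∧ corner s₁ (Prod.swap s₂) ∈ ε₂ ∧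
    sOrd (corner (Prod.swap s₁) s₂) = sOrd s₁ ∧
    sOrd (corner s₁ (Prod.swap s₂)) = sOrd s₂ := by
  have hsep₁ : IsSep G s₁ := (h₁.2.1 s₁ hs₁).1
  have hsep₂ : IsSep G s₂ := (h₂.2.1 s₂ hs₂).1
  have hsub := submod s₁ s₂
  have hd : sOrd (corner (Prod.swap s₁) (Prod.swap s₂)) < sOrd s₁ := by omega
  -- Step 1: apply the entanglement property of ε₂ at swap s₂ with t = s₁
  have hcr2 : Crosses (Prod.swap s₂) s₁ :=
    crosses_swap_left _ _ (crosses_comm _ _ hcross)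
  have e1 : corner (Prod.swap s₂) s₁ = corner s₁ (Prod.swap s₂) := corner_comm _ _
  have e2 : corner (Prod.swap s₂) (Prod.swap s₁) = corner (Prod.swap s₁) (Prod.swap s₂) :=
    corner_comm _ _
  have step1 := h₂.2.2.2 (Prod.swap s₂) (h₂.2.2.1 s₂ hs₂) s₁ hsep₁ hcr2
    (by rw [e1, sOrd_swap]; exact hg1)
    (by rw [e2, sOrd_swap]; omega)
  rw [e1, e2, sOrd_swap] at step1
  have step1' : sOrd (corner s₁ (Prod.swap s₂)) = sOrd s₂ ∧ corner s₁ (Prod.swap s₂) ∈ ε₂ := by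
    rcases step1 with h | h
    · exact h
    · omega
  -- Step 2: the order of the corner (swap s₁) s₂ is at most sOrd s₁
  have hsub2 := submod s₁ (Prod.swap s₂)
  rw [Prod.swap_swap, sOrd_swap] at hsub2
  have hle : sOrd (corner (Prod.swap s₁) s₂) ≤ sOrd s₁ := by omega
  -- Step 3: apply the entanglement property of ε₁ at swap s₁ with t = s₂
  have hcr1 : Crosses (Prod.swap s₁) s₂ := crosses_swap_left _ _ hcross
  have step3 := h₁.2.2.2 (Prod.swap s₁) (h₁.2.2.1 s₁ hs₁) s₂ hsep₂ hcr1
    (by rw [sOrd_swap]; simpa using hle)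
    (by rw [sOrd_swap]; omega)
  rw [sOrd_swap] at step3
  have step3' : sOrd (corner (Prod.swap s₁) s₂) = sOrd s₁ ∧ corner (Prod.swap s₁) s₂ ∈ ε₁ := by
    rcases step3 with h | h
    · exact h
    · omega
  exact ⟨step3'.2, step1'.2, step3'.1, step1'.1⟩


/-- Case 1 of the main proof: if exactly three corners of the crossing
separations `s₁ ∈ ε₁`, `s₂ ∈ ε₂` (with `|s₁| ≤ |s₂|`) have order at most
`|s₂|`, then there are opposite corners `c₁ ∈ ε₁` and `c₂ ∈ ε₂` with
`|c₁| = |s₁|` and `|c₂| = |s₂|`. -/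
theorem stmt_15 {V : Type*} [Fintype V] (G : SimpleGraph V)
    (ε₁ ε₂ : Set (GSep V)) (h₁ : IsEntanglement G ε₁) (h₂ : IsEntanglement G ε₂)
    (s₁ s₂ : GSep V) (hs₁ : s₁ ∈ ε₁) (hs₂ : s₂ ∈ ε₂)
    (hcross : Crosses s₁ s₂) (hord : sOrd s₁ ≤ sOrd s₂)
    (hthree :
      -- exactly three of the four corners are green, i.e. have order ≤ |s₂|
      (sOrd (corner s₁ s₂) ≤ sOrd s₂ ∧ sOrd (corner s₁ (Prod.swap s₂)) ≤ sOrd s₂ ∧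
         sOrd (corner (Prod.swap s₁) s₂) ≤ sOrd s₂ ∧
         ¬ sOrd (corner (Prod.swap s₁) (Prod.swap s₂)) ≤ sOrd s₂) ∨
      (sOrd (corner s₁ s₂) ≤ sOrd s₂ ∧ sOrd (corner s₁ (Prod.swap s₂)) ≤ sOrd s₂ ∧
         ¬ sOrd (corner (Prod.swap s₁) s₂) ≤ sOrd s₂ ∧
         sOrd (corner (Prod.swap s₁) (Prod.swap s₂)) ≤ sOrd s₂) ∨
      (sOrd (corner s₁ s₂) ≤ sOrd s₂ ∧ ¬ sOrd (corner s₁ (Prod.swap s₂)) ≤ sOrd s₂ ∧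
         sOrd (corner (Prod.swap s₁) s₂) ≤ sOrd s₂ ∧
         sOrd (corner (Prod.swap s₁) (Prod.swap s₂)) ≤ sOrd s₂) ∨
      (¬ sOrd (corner s₁ s₂) ≤ sOrd s₂ ∧ sOrd (corner s₁ (Prod.swap s₂)) ≤ sOrd s₂ ∧
         sOrd (corner (Prod.swap s₁) s₂) ≤ sOrd s₂ ∧
         sOrd (corner (Prod.swap s₁) (Prod.swap s₂)) ≤ sOrd s₂)) :
    -- there are opposite corners c₁ ∈ ε₁, c₂ ∈ ε₂ with |c₁| = |s₁|, |c₂| = |s₂|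
    (corner s₁ s₂ ∈ ε₁ ∧ corner (Prod.swap s₁) (Prod.swap s₂) ∈ ε₂ ∧
       sOrd (corner s₁ s₂) = sOrd s₁ ∧
       sOrd (corner (Prod.swap s₁) (Prod.swap s₂)) = sOrd s₂) ∨
    (corner (Prod.swap s₁) (Prod.swap s₂) ∈ ε₁ ∧ corner s₁ s₂ ∈ ε₂ ∧
       sOrd (corner (Prod.swap s₁) (Prod.swap s₂)) = sOrd s₁ ∧
       sOrd (corner s₁ s₂) = sOrd s₂) ∨
    (corner s₁ (Prod.swap s₂) ∈ ε₁ ∧ corner (Prod.swap s₁) s₂ ∈ ε₂ ∧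
       sOrd (corner s₁ (Prod.swap s₂)) = sOrd s₁ ∧
       sOrd (corner (Prod.swap s₁) s₂) = sOrd s₂) ∨
    (corner (Prod.swap s₁) s₂ ∈ ε₁ ∧ corner s₁ (Prod.swap s₂) ∈ ε₂ ∧
       sOrd (corner (Prod.swap s₁) s₂) = sOrd s₁ ∧
       sOrd (corner s₁ (Prod.swap s₂)) = sOrd s₂) := by
  have hs₁' : Prod.swap s₁ ∈ ε₁ := h₁.2.2.1 s₁ hs₁
  have hs₂' : Prod.swap s₂ ∈ ε₂ := h₂.2.2.1 s₂ hs₂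
  rcases hthree with ⟨hA, hB, hC, hD⟩ | ⟨hA, hB, hC, hD⟩ | ⟨hA, hB, hC, hD⟩ | ⟨hA, hB, hC, hD⟩
  · -- bad corner: corner (swap s₁) (swap s₂)
    have h := key G ε₁ ε₂ h₁ h₂ (Prod.swap s₁) (Prod.swap s₂) hs₁' hs₂'
      (crosses_swap_left _ _ (crosses_comm _ _ (crosses_swap_left _ _ (crosses_comm _ _ hcross))))
      (by rw [sOrd_swap, sOrd_swap]; exact hord)
      (by rw [sOrd_swap]; exact hD)
      (by rw [Prod.swap_swap, sOrd_swap]; exact hC)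
    rw [Prod.swap_swap, sOrd_swap, sOrd_swap] at h
    exact Or.inr (Or.inr (Or.inl ⟨h.1, h.2.1, h.2.2.1, h.2.2.2⟩))
  · -- bad corner: corner (swap s₁) s₂
    have h := key G ε₁ ε₂ h₁ h₂ (Prod.swap s₁) s₂ hs₁' hs₂
      (crosses_swap_left _ _ hcross)
      (by rw [sOrd_swap]; exact hord)
      hC hD
    rw [Prod.swap_swap, sOrd_swap] at h
    exact Or.inl ⟨h.1, h.2.1, h.2.2.1, h.2.2.2⟩
  · -- bad corner: corner s₁ (swap s₂)
    have h := key G ε₁ ε₂ h₁ h₂ s₁ (Prod.swap s₂) hs₁ hs₂'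
      (crosses_comm _ _ (crosses_swap_left _ _ (crosses_comm _ _ hcross)))
      (by rw [sOrd_swap]; exact hord)
      (by rw [sOrd_swap]; exact hB)
      (by rw [Prod.swap_swap, sOrd_swap]; exact hA)
    rw [Prod.swap_swap, sOrd_swap] at h
    exact Or.inr (Or.inl ⟨h.1, h.2.1, h.2.2.1, h.2.2.2⟩)
  · -- bad corner: corner s₁ s₂
    have h := key G ε₁ ε₂ h₁ h₂ s₁ s₂ hs₁ hs₂ hcross hord hA hB
    exact Or.inr (Or.inr (Or.inr ⟨h.1, h.2.1, h.2.2.1, h.2.2.2⟩))
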